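/- arXiv:0902.1378 — 3 statements merged into one kernel-verified Lean document; each statement's English description precedes it below -/
import Mathlib

section
/- If every k-server algorithm execution on the concatenated sequence ρσ starting from A₀ that realizes w_{ρσ}(X) must pass through configuration A₀ at the end of some round t with |ρ| ≤ t < |ρσ|, then for every configuration X: w_{ρσ}(X) = w_{ρσ}(A₀) + D(A₀, X). -/
open Finset

variable {V : Type*}

/-- Matching distance between two finite configurations: the infimum over
bijections `f : X ≃ Y` of the total distance moved. -/
noncomputable def matchDist [MetricSpace V] (X Y : Finset V) : ℝ :=
  sInf { c | ∃ f : (X : Type _) ≃ (Y : Type _), c = ∑ x : X, dist (x : V) ((f x : V)) }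

/-- Total movement cost of a schedule of configurations. -/
noncomputable def schedCost [MetricSpace V] {n : ℕ} (C : Fin (n + 1) → Finset V) : ℝ :=
  ∑ i : Fin n, matchDist (C i.castSucc) (C i.succ)

/-- `C` is a schedule of `k`-configurations serving the request sequence `ρ`
starting from `A₀`. -/
def Serves (k : ℕ) (A₀ : Finset V) (ρ : List V) (C : Fin (ρ.length + 1) → Finset V) : Prop :=
  C 0 = A₀ ∧ (∀ i, (C i).card = k) ∧ ∀ i : Fin ρ.length, ρ.get i ∈ C i.succ

/-- The work function: the cheapest cost to serve `ρ` from `A₀` and end in `X`. -/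
noncomputable def workFn [MetricSpace V] (k : ℕ) (A₀ : Finset V) (ρ : List V)
    (X : Finset V) : ℝ :=
  sInf { c | ∃ C : Fin (ρ.length + 1) → Finset V,
    Serves k A₀ ρ C ∧ C (Fin.last _) = X ∧ c = schedCost C }

/-- The optimal cost of serving `ρ` from `A₀`. -/
noncomputable def OPTcost [MetricSpace V] (k : ℕ) (A₀ : Finset V) (ρ : List V) : ℝ :=
  sInf { c | ∃ X : Finset V, X.card = k ∧ c = workFn k A₀ ρ X }

/-- A lazy schedule: each round, at most one server moves, onto the current request. -/
def IsLazy [DecidableEq V] (ρ : List V) (C : Fin (ρ.length + 1) → Finset V) : Prop :=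
  ∀ i : Fin ρ.length, ∃ x ∈ C i.castSucc,
    C i.succ = insert (ρ.get i) ((C i.castSucc).erase x)



section Helpers
variable [MetricSpace V]

lemma matchDist_nonneg (X Y : Finset V) : 0 ≤ matchDist X Y := by
  apply Real.sInf_nonneg
  rintro c ⟨f, rfl⟩
  exact Finset.sum_nonneg fun x _ => dist_nonneg

lemma matchDist_le (X Y : Finset V) (f : (X : Type _) ≃ (Y : Type _)) :
    matchDist X Y ≤ ∑ x : X, dist (x : V) ((f x : V)) := by
  apply csInf_le
  · exact ⟨0, by rintro c ⟨g, rfl⟩; exact Finset.sum_nonneg fun x _ => dist_nonneg⟩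
  · exact ⟨f, rfl⟩

lemma matchDist_self (X : Finset V) : matchDist X X = 0 := by
  refine le_antisymm ?_ (matchDist_nonneg X X)
  simpa using matchDist_le X X (Equiv.refl _)

lemma matchDist_exists (X Y : Finset V) (h : X.card = Y.card) :
    ∃ f : (X : Type _) ≃ (Y : Type _),
      matchDist X Y = ∑ x : X, dist (x : V) ((f x : V)) := by
  have hne : Nonempty ((X : Type _) ≃ (Y : Type _)) :=
    ⟨Fintype.equivOfCardEq (by simp [h])⟩
  have hset : { c | ∃ f : (X : Type _) ≃ (Y : Type _), c = ∑ x : X, dist (x : V) ((f x : V)) }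
      = Set.range (fun f : (X : Type _) ≃ (Y : Type _) => ∑ x : X, dist (x : V) ((f x : V))) := by
    ext c; simp [eq_comm, Set.range]
  have hmem : matchDist X Y ∈
      { c | ∃ f : (X : Type _) ≃ (Y : Type _), c = ∑ x : X, dist (x : V) ((f x : V)) } := by
    apply Set.Nonempty.csInf_mem
    · obtain ⟨f⟩ := hne; exact ⟨_, f, rfl⟩
    · rw [hset]; exact Set.finite_range _
  exact hmem

lemma matchDist_triangle (X Y Z : Finset V) (hxy : X.card = Y.card) (hyz : Y.card = Z.card) :
    matchDist X Z ≤ matchDist X Y + matchDist Y Z := by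
  obtain ⟨f, hf⟩ := matchDist_exists X Y hxy
  obtain ⟨g, hg⟩ := matchDist_exists Y Z hyz
  calc matchDist X Z ≤ ∑ x : X, dist (x : V) ((g (f x) : V)) := matchDist_le X Z (f.trans g)
    _ ≤ ∑ x : X, (dist (x : V) ((f x : V)) + dist ((f x : V)) ((g (f x) : V))) :=
        Finset.sum_le_sum fun x _ => dist_triangle _ _ _
    _ = (∑ x : X, dist (x : V) ((f x : V))) + ∑ x : X, dist ((f x : V)) ((g (f x) : V)) :=
        Finset.sum_add_distrib
    _ = matchDist X Y + matchDist Y Z := by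
        rw [hf, hg]
        congr 1
        exact Equiv.sum_comp f (fun y : (Y : Type _) => dist (y : V) ((g y : V)))

lemma matchDist_path {k : ℕ} (E : ℕ → Finset V) (hc : ∀ i, (E i).card = k)
    {a b : ℕ} (hab : a ≤ b) :
    matchDist (E a) (E b) ≤ ∑ j ∈ Finset.Ico a b, matchDist (E j) (E (j + 1)) := by
  induction b, hab using Nat.le_induction with
  | base => simp [matchDist_self]
  | succ b hab ih =>
      rw [Finset.sum_Ico_succ_top hab]
      calc matchDist (E a) (E (b + 1))
          ≤ matchDist (E a) (E b) + matchDist (E b) (E (b + 1)) :=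
            matchDist_triangle _ _ _ (by rw [hc, hc]) (by rw [hc, hc])
        _ ≤ _ := by gcongr

lemma schedCost_nonneg {n : ℕ} (C : Fin (n + 1) → Finset V) : 0 ≤ schedCost C :=
  Finset.sum_nonneg fun _ _ => matchDist_nonneg _ _

end Helpers

def nthConf {n : ℕ} (C : Fin (n + 1) → Finset V) (j : ℕ) : Finset V :=
  C ⟨min j n, by omega⟩

lemma nthConf_castSucc {n : ℕ} (C : Fin (n + 1) → Finset V) (i : Fin n) :
    C i.castSucc = nthConf C i.val := by
  unfold nthConf
  congr 1
  exact Fin.ext (by simp [Nat.min_eq_left i.isLt.le])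

lemma nthConf_succ {n : ℕ} (C : Fin (n + 1) → Finset V) (i : Fin n) :
    C i.succ = nthConf C (i.val + 1) := by
  unfold nthConf
  congr 1
  exact Fin.ext (by simp [Nat.min_eq_left i.isLt])

lemma nthConf_val {n : ℕ} (C : Fin (n + 1) → Finset V) (i : Fin (n + 1)) :
    nthConf C i.val = C i := by
  unfold nthConf
  congr 1
  exact Fin.ext (by simp [Nat.min_eq_left (Nat.lt_succ_iff.mp i.isLt)])

lemma schedCost_eq [MetricSpace V] {n : ℕ} (C : Fin (n + 1) → Finset V) :
    schedCost C = ∑ j ∈ Finset.range n, matchDist (nthConf C j) (nthConf C (j + 1)) := by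
  rw [schedCost, ← Fin.sum_univ_eq_sum_range (fun j => matchDist (nthConf C j) (nthConf C (j + 1))) n]
  exact Finset.sum_congr rfl fun i _ => by rw [nthConf_castSucc C i, nthConf_succ C i]

/-- if every work-function value `w_{ρσ}(X)` is realized by a
schedule passing through `A₀` during the `σ`-phase, then
`w_{ρσ}(X) = w_{ρσ}(A₀) + D(A₀, X)` for every configuration `X`. -/
theorem workFn_decomposes [MetricSpace V] [Fintype V] (k : ℕ) (hk : 0 < k)
    (A₀ : Finset V) (hA₀ : A₀.card = k) (ρ σ : List V)
    (hσ : ∀ r ∈ σ, r ∈ A₀)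
    (hyp : ∀ X : Finset V, X.card = k →
      ∃ C : Fin ((ρ ++ σ).length + 1) → Finset V,
        Serves k A₀ (ρ ++ σ) C ∧ C (Fin.last _) = X ∧
        schedCost C = workFn k A₀ (ρ ++ σ) X ∧
        ∃ t : Fin ((ρ ++ σ).length + 1),
          ρ.length ≤ (t : ℕ) ∧ (t : ℕ) < (ρ ++ σ).length ∧ C t = A₀) :
    ∀ X : Finset V, X.card = k →
      workFn k A₀ (ρ ++ σ) X = workFn k A₀ (ρ ++ σ) A₀ + matchDist A₀ X := by
  intro X hX
  set n := (ρ ++ σ).length with hn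
  obtain ⟨Cx, ⟨hCx0, hCxcard, hCxserve⟩, hCxlast, hCxcost, t, ht1, ht2, hCt⟩ := hyp X hX
  obtain ⟨Ca, ⟨hCa0, hCacard, hCaserve⟩, hCalast, hCacost, -⟩ := hyp A₀ hA₀
  have hn0 : 0 < n := Nat.lt_of_le_of_lt (Nat.zero_le _) ht2
  have hlen2 : n = ρ.length + σ.length := by rw [hn, List.length_append]
  have hbdd : ∀ Y : Finset V, BddBelow {c | ∃ C : Fin (n + 1) → Finset V,
      Serves k A₀ (ρ ++ σ) C ∧ C (Fin.last _) = Y ∧ c = schedCost C} := by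
    intro Y
    exact ⟨0, by rintro c ⟨C, _, _, rfl⟩; exact schedCost_nonneg C⟩
  have hwle : ∀ (Y : Finset V) (C : Fin (n + 1) → Finset V),
      Serves k A₀ (ρ ++ σ) C → C (Fin.last _) = Y →
      workFn k A₀ (ρ ++ σ) Y ≤ schedCost C := by
    intro Y C hC hY
    rw [workFn]
    exact csInf_le (hbdd Y) ⟨C, hC, hY, rfl⟩
  have hlastreq : (ρ ++ σ).get ⟨n - 1, by omega⟩ ∈ X := by
    have h := hCxserve ⟨n - 1, by omega⟩
    have heq : (⟨n - 1, by omega⟩ : Fin n).succ = Fin.last n :=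
      Fin.ext (show n - 1 + 1 = n by omega)
    rwa [heq, hCxlast] at h
  -- easy direction
  have hle : workFn k A₀ (ρ ++ σ) X ≤ workFn k A₀ (ρ ++ σ) A₀ + matchDist A₀ X := by
    obtain ⟨C', hC'def⟩ : ∃ C' : Fin (n + 1) → Finset V,
        C' = fun i : Fin (n + 1) => if (i : ℕ) = n then X else Ca i := ⟨_, rfl⟩
    have hC'serve : Serves k A₀ (ρ ++ σ) C' := by
      refine ⟨?_, ?_, ?_⟩
      · simp only [hC'def]
        rw [if_neg (by simp only [Fin.val_zero]; omega), hCa0]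
      · intro i
        simp only [hC'def]
        split
        · exact hX
        · exact hCacard i
      · intro i
        have hilt := i.isLt
        by_cases h : (i : ℕ) + 1 = n
        · have hi : i = ⟨n - 1, by omega⟩ := Fin.ext (show (i : ℕ) = n - 1 by omega)
          have hs : C' i.succ = X := by simp [hC'def, Fin.val_succ, h]
          rw [hs, hi]
          exact hlastreq
        · have hs : C' i.succ = Ca i.succ := by simp [hC'def, Fin.val_succ, h]
          rw [hs]
          exact hCaserve i
    have hC'last : C' (Fin.last n) = X := by simp [hC'def]
    have hcost : schedCost C' ≤ schedCost Ca + matchDist A₀ X := by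
      rw [schedCost, schedCost]
      have key : ∀ i : Fin n, matchDist (C' i.castSucc) (C' i.succ) ≤
          matchDist (Ca i.castSucc) (Ca i.succ) +
            (if (i : ℕ) + 1 = n then matchDist A₀ X else 0) := by
        intro i
        have hilt := i.isLt
        have hcs : C' i.castSucc = Ca i.castSucc := by
          simp only [hC'def]
          exact if_neg (show ¬((i : ℕ) = n) by omega)
        by_cases h : (i : ℕ) + 1 = n
        · have h1 : C' i.succ = X := by simp [hC'def, Fin.val_succ, h]
          have h2 : Ca i.succ = A₀ := by
            have hl : i.succ = Fin.last n := Fin.ext (show (i : ℕ) + 1 = n from h)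
            rw [hl, hCalast]
          rw [hcs, h1, if_pos h]
          calc matchDist (Ca i.castSucc) X
              ≤ matchDist (Ca i.castSucc) A₀ + matchDist A₀ X :=
                matchDist_triangle _ _ _ (by rw [hCacard, hA₀]) (by rw [hA₀, hX])
            _ = matchDist (Ca i.castSucc) (Ca i.succ) + matchDist A₀ X := by rw [h2]
        · have h1 : C' i.succ = Ca i.succ := by simp [hC'def, Fin.val_succ, h]
          rw [hcs, h1, if_neg h, add_zero]
      have hsum : (∑ i : Fin n, if (i : ℕ) + 1 = n then matchDist A₀ X else 0)
          = matchDist A₀ X := by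
        rw [Finset.sum_eq_single (⟨n - 1, by omega⟩ : Fin n)]
        · exact if_pos (show n - 1 + 1 = n by omega)
        · intro b _ hb
          refine if_neg fun hbn => hb (Fin.ext (show (b : ℕ) = n - 1 by omega))
        · intro h
          exact absurd (Finset.mem_univ _) h
      calc (∑ i : Fin n, matchDist (C' i.castSucc) (C' i.succ))
          ≤ ∑ i : Fin n, (matchDist (Ca i.castSucc) (Ca i.succ) +
              (if (i : ℕ) + 1 = n then matchDist A₀ X else 0)) :=
            Finset.sum_le_sum fun i _ => key i
        _ = (∑ i : Fin n, matchDist (Ca i.castSucc) (Ca i.succ)) +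
              ∑ i : Fin n, (if (i : ℕ) + 1 = n then matchDist A₀ X else 0) :=
            Finset.sum_add_distrib
        _ = (∑ i : Fin n, matchDist (Ca i.castSucc) (Ca i.succ)) + matchDist A₀ X := by
            rw [hsum]
    calc workFn k A₀ (ρ ++ σ) X ≤ schedCost C' := hwle X C' hC'serve hC'last
      _ ≤ schedCost Ca + matchDist A₀ X := hcost
      _ = workFn k A₀ (ρ ++ σ) A₀ + matchDist A₀ X := by rw [hCacost]
  -- hard direction
  have hge : workFn k A₀ (ρ ++ σ) A₀ + matchDist A₀ X ≤ workFn k A₀ (ρ ++ σ) X := by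
    obtain ⟨C'', hC''def⟩ : ∃ C'' : Fin (n + 1) → Finset V,
        C'' = fun i : Fin (n + 1) => if (i : ℕ) ≤ (t : ℕ) then Cx i else A₀ := ⟨_, rfl⟩
    have h1 : ∀ j, j ≤ (t : ℕ) → nthConf C'' j = nthConf Cx j := by
      intro j hj
      unfold nthConf
      simp only [hC''def]
      exact if_pos (le_trans (min_le_left j n) hj)
    have h2 : ∀ j, (t : ℕ) ≤ j → nthConf C'' j = A₀ := by
      intro j hj
      unfold nthConf
      simp only [hC''def]
      by_cases h : min j n ≤ (t : ℕ)
      · have hmin : min j n = (t : ℕ) := by omega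
        rw [if_pos h]
        have he : (⟨min j n, by omega⟩ : Fin (n + 1)) = t := Fin.ext hmin
        rw [he, hCt]
      · exact if_neg h
    have hC''serve : Serves k A₀ (ρ ++ σ) C'' := by
      refine ⟨?_, ?_, ?_⟩
      · simp only [hC''def]
        rw [if_pos (by simp), hCx0]
      · intro i
        simp only [hC''def]
        split
        · exact hCxcard i
        · exact hA₀
      · intro i
        have hilt := i.isLt
        by_cases h : (i : ℕ) + 1 ≤ (t : ℕ)
        · have hs : C'' i.succ = Cx i.succ := by
            simp only [hC''def]; exact if_pos h
          rw [hs]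
          exact hCxserve i
        · have hs : C'' i.succ = A₀ := by
            simp only [hC''def]; exact if_neg h
          rw [hs]
          have hlenρ : ρ.length ≤ (i : ℕ) := by omega
          have hget : (ρ ++ σ).get i = σ[(i : ℕ) - ρ.length]'(by omega) := by
            rw [List.get_eq_getElem]
            exact List.getElem_append_right hlenρ
          rw [hget]
          exact hσ _ (List.getElem_mem _)
    have hC''last : C'' (Fin.last n) = A₀ := by
      simp only [hC''def]
      rw [if_neg (by simp only [Fin.val_last]; omega)]
    have hEcard : ∀ j, (nthConf Cx j).card = k := fun j => hCxcard _
    have hEt : nthConf Cx (t : ℕ) = A₀ := by rw [nthConf_val Cx t, hCt]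
    have hEn : nthConf Cx n = X := by
      have h := nthConf_val Cx (Fin.last n)
      rw [Fin.val_last] at h
      rw [h, hCxlast]
    have hsplit : schedCost Cx =
        (∑ j ∈ Finset.Ico 0 (t : ℕ), matchDist (nthConf Cx j) (nthConf Cx (j + 1)))
        + ∑ j ∈ Finset.Ico (t : ℕ) n, matchDist (nthConf Cx j) (nthConf Cx (j + 1)) := by
      rw [schedCost_eq, Finset.range_eq_Ico,
        ← Finset.sum_Ico_consecutive (fun j => matchDist (nthConf Cx j) (nthConf Cx (j + 1)))
          (Nat.zero_le (t : ℕ)) (le_of_lt ht2)]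
    have htail : matchDist A₀ X ≤
        ∑ j ∈ Finset.Ico (t : ℕ) n, matchDist (nthConf Cx j) (nthConf Cx (j + 1)) := by
      have h := matchDist_path (nthConf Cx) hEcard (le_of_lt ht2)
      rwa [hEt, hEn] at h
    have hhead : workFn k A₀ (ρ ++ σ) A₀ ≤
        ∑ j ∈ Finset.Ico 0 (t : ℕ), matchDist (nthConf Cx j) (nthConf Cx (j + 1)) := by
      have hcostC'' : schedCost C'' =
          ∑ j ∈ Finset.Ico 0 (t : ℕ), matchDist (nthConf Cx j) (nthConf Cx (j + 1)) := by
        rw [schedCost_eq, Finset.range_eq_Ico,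
          ← Finset.sum_Ico_consecutive (fun j => matchDist (nthConf C'' j) (nthConf C'' (j + 1)))
            (Nat.zero_le (t : ℕ)) (le_of_lt ht2)]
        have e1 : ∑ j ∈ Finset.Ico 0 (t : ℕ), matchDist (nthConf C'' j) (nthConf C'' (j + 1))
            = ∑ j ∈ Finset.Ico 0 (t : ℕ), matchDist (nthConf Cx j) (nthConf Cx (j + 1)) :=
          Finset.sum_congr rfl fun j hj => by
            have hj' := Finset.mem_Ico.mp hj
            rw [h1 j (by omega), h1 (j + 1) (by omega)]
        have e2 : ∑ j ∈ Finset.Ico (t : ℕ) n,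
            matchDist (nthConf C'' j) (nthConf C'' (j + 1)) = 0 :=
          Finset.sum_eq_zero fun j hj => by
            have hj' := Finset.mem_Ico.mp hj
            rw [h2 j (by omega), h2 (j + 1) (by omega), matchDist_self]
        rw [e1, e2, add_zero]
      rw [← hcostC'']
      exact hwle A₀ C'' hC''serve hC''last
    have hwx : workFn k A₀ (ρ ++ σ) X = schedCost Cx := hCxcost.symm
    rw [hwx, hsplit]
    linarith
  exact le_antisymm hle hge
end

section
/- Main theorem (abstract form): let ALG be an online k-server algorithm and suppose (i) ALG is α-competitive, i.e., for every initial configuration A₀ there is β(A₀) ≥ 0 with ALG(A₀,τ) ≤ α·OPT(A₀,τ) + β(A₀) for all finite request sequences τ; (ii) for every A₀ and ρ there exists an 'anchor' sequence σ of requests in A₀ such that ALG(A₀, (ρσ)^q) = q·ALG(A₀, ρσ), OPT(A₀, (ρσ)^q) = q·OPT(A₀, ρσ), and OPT(A₀, ρσ) ≤ 2·OPT(A₀, ρ). Then ALG is strictly 2α-competitive: ALG(A₀, ρ) ≤ 2α·OPT(A₀, ρ) for every A₀ and ρ. -/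
open Finset

variable {V : Type*}

/-!
Competitiveness on `q` copies of `ρσ` gives `q · ALG(ρσ) ≤ q · α · OPT(ρσ) + β` for every `q`,
so the additive constant disappears as `q → ∞`: `ALG(ρσ) ≤ α · OPT(ρσ)`. Monotonicity and
`OPT(ρσ) ≤ 2 · OPT(ρ)` then give `ALG(ρ) ≤ ALG(ρσ) ≤ 2α · OPT(ρ)`.
-/

theorem le_of_forall_nat_mul_le_mul_add {a b β : ℝ}
    (h : ∀ q : ℕ, 1 ≤ q → q * a ≤ q * b + β) : a ≤ b := by
  by_contra! hba
  have hgap : 0 < a - b := sub_pos.mpr hba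
  obtain ⟨q, hq⟩ := exists_nat_gt (β / (a - b))
  have hβ : β < (q + 1 : ℕ) * (a - b) := by
    rw [div_lt_iff₀ hgap] at hq
    push_cast
    nlinarith
  have := h (q + 1) (Nat.le_add_left 1 q)
  linarith

theorem strictly_competitive_general [MetricSpace V] (k : ℕ)
    (ALG OPT : Finset V → List V → ℝ) (α : ℝ) (hα : 0 < α)
    (hmono : ∀ A₀ ρ σ, ALG A₀ ρ ≤ ALG A₀ (ρ ++ σ))
    (hcomp : ∀ A₀ : Finset V, A₀.card = k → ∃ β : ℝ, 0 ≤ β ∧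
      ∀ τ : List V, ALG A₀ τ ≤ α * OPT A₀ τ + β)
    (hanchor : ∀ A₀ : Finset V, A₀.card = k → ∀ ρ : List V,
      ∃ σ : List V, (∀ r ∈ σ, r ∈ A₀) ∧
        (∀ q : ℕ, 1 ≤ q →
          ALG A₀ (List.flatten (List.replicate q (ρ ++ σ))) = q * ALG A₀ (ρ ++ σ) ∧
          OPT A₀ (List.flatten (List.replicate q (ρ ++ σ))) = q * OPT A₀ (ρ ++ σ)) ∧
        OPT A₀ (ρ ++ σ) ≤ 2 * OPT A₀ ρ) :
    ∀ A₀ : Finset V, A₀.card = k → ∀ ρ : List V,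
      ALG A₀ ρ ≤ 2 * α * OPT A₀ ρ := by
  intro A₀ hA₀ ρ
  obtain ⟨β, -, hβ⟩ := hcomp A₀ hA₀
  obtain ⟨σ, -, hrepeat, hdouble⟩ := hanchor A₀ hA₀ ρ
  have hstrict : ALG A₀ (ρ ++ σ) ≤ α * OPT A₀ (ρ ++ σ) := by
    refine le_of_forall_nat_mul_le_mul_add (β := β) fun q hq => ?_
    have h := hβ (List.flatten (List.replicate q (ρ ++ σ)))
    rw [(hrepeat q hq).1, (hrepeat q hq).2] at h
    linarith
  calc ALG A₀ ρ ≤ ALG A₀ (ρ ++ σ) := hmono A₀ ρ σ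
    _ ≤ α * OPT A₀ (ρ ++ σ) := hstrict
    _ ≤ α * (2 * OPT A₀ ρ) := mul_le_mul_of_nonneg_left hdouble hα.le
    _ = 2 * α * OPT A₀ ρ := by ring

/-- main theorem, abstract form: a competitive online algorithm
admitting anchors is strictly `2α`-competitive. -/
theorem strictly_competitive [MetricSpace V] (k : ℕ) (hk : 0 < k)
    (ALG OPT : Finset V → List V → ℝ) (α : ℝ) (hα : 0 < α)
    (hALGnonneg : ∀ A₀ τ, 0 ≤ ALG A₀ τ) (hOPTnonneg : ∀ A₀ τ, 0 ≤ OPT A₀ τ)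
    (hmono : ∀ A₀ ρ σ, ALG A₀ ρ ≤ ALG A₀ (ρ ++ σ))
    (hcomp : ∀ A₀ : Finset V, A₀.card = k → ∃ β : ℝ, 0 ≤ β ∧
      ∀ τ : List V, ALG A₀ τ ≤ α * OPT A₀ τ + β)
    (hanchor : ∀ A₀ : Finset V, A₀.card = k → ∀ ρ : List V,
      ∃ σ : List V, (∀ r ∈ σ, r ∈ A₀) ∧
        (∀ q : ℕ, 1 ≤ q →
          ALG A₀ (List.flatten (List.replicate q (ρ ++ σ))) = q * ALG A₀ (ρ ++ σ) ∧
          OPT A₀ (List.flatten (List.replicate q (ρ ++ σ))) = q * OPT A₀ (ρ ++ σ)) ∧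
        OPT A₀ (ρ ++ σ) ≤ 2 * OPT A₀ ρ) :
    ∀ A₀ : Finset V, A₀.card = k → ∀ ρ : List V,
      ALG A₀ ρ ≤ 2 * α * OPT A₀ ρ :=
  strictly_competitive_general k ALG OPT α hα hmono hcomp hanchor
end

section
/- If an online algorithm never returns to A₀ during the anchor phase then its cost is large: let A₀ have minimum pairwise distance ℓ > 0 and let a lazy online algorithm serve ρσ from A₀, where σ = (x₁⋯x_k)^m is the round-robin over A₀ = {x₁,…,x_k}. If the algorithm's configuration at the end of round |ρσ| is not A₀, then its total cost on ρσ is at least m·ℓ. -/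
open Finset

variable {V : Type*}

/-!
A lazy configuration that contains `A₀` and receives only requests from `A₀` never changes, so
from round `|ρ|` on the algorithm is never in `A₀`. In a lazy step from `X` the matching cost is at
least the distance travelled by the evicted server, because `y ↦ dist y r` is 1-Lipschitz. So if
no server jumps between two distinct points of `A₀` during a round-robin cycle, every step keeps
the servers already on `A₀` and adds the request, and the cycle ends in `A₀`. Each of the `m`
disjoint cycles therefore contains a step of cost at least `ℓ`.
-/

theorem List.getElem_flatten_replicate {α : Type*} (l : List α) {m j t : ℕ} (ht : t < l.length)
    (h : j * l.length + t < (List.replicate m l).flatten.length) :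
    (List.replicate m l).flatten[j * l.length + t] = l[t] := by
  induction m generalizing j with
  | zero => simp at h
  | succ m ih =>
    simp only [List.replicate_succ, List.flatten_cons] at h ⊢
    rcases j with _ | j
    · simp [List.getElem_append_left, ht]
    · have hj : (j + 1) * l.length + t = l.length + (j * l.length + t) := by ring
      simp only [hj, List.getElem_append_right (Nat.le_add_right _ _),
        Nat.add_sub_cancel_left] at h ⊢
      exact ih _

theorem List.length_flatten_replicate {α : Type*} (l : List α) (m : ℕ) :
    (List.replicate m l).flatten.length = m * l.length := by
  simp

theorem List.exists_get_append_flatten_replicate_ofFn {α : Type*} (ρ : List α) {k m j : ℕ}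
    (a : Fin k → α) (hj : j < m) (t : Fin k) :
    ∃ i : Fin (ρ ++ (List.replicate m (List.ofFn a)).flatten).length,
      (ρ.length + j * k ≤ i ∧ (i : ℕ) < ρ.length + j * k + k) ∧
        (ρ ++ (List.replicate m (List.ofFn a)).flatten).get i = a t := by
  have hlen : (List.replicate m (List.ofFn a)).flatten.length = m * k := by
    rw [List.length_flatten_replicate, List.length_ofFn]
  have hjt : j * k + t < m * k := by nlinarith [t.2]
  have hround := List.getElem_flatten_replicate (List.ofFn a) (m := m) (j := j) (t := t)
    (by simp) (by simpa [hlen] using hjt)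
  simp only [List.length_ofFn, List.getElem_ofFn] at hround
  refine ⟨⟨ρ.length + (j * k + t), by simpa [hlen] using hjt⟩, ⟨by simp, by linarith [t.2]⟩, ?_⟩
  simpa [List.getElem_append_right] using hround

theorem Fin.induction_from {n : ℕ} {P : Fin (n + 1) → Prop} {s : Fin (n + 1)} (hs : P s)
    (step : ∀ i : Fin n, (s : ℕ) ≤ i → P i.castSucc → P i.succ) (t : Fin (n + 1)) (hst : s ≤ t) :
    P t := by
  induction t using Fin.induction with
  | zero => rwa [le_antisymm hst (Fin.zero_le s)] at hs
  | succ i ih =>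
    rcases hst.eq_or_lt with rfl | hlt
    · exact hs
    · have hsi : s ≤ i.castSucc := Fin.le_castSucc_iff.2 hlt
      exact step i hsi (ih hsi)

lemma mul_le_sum_of_injective {ι : Type*} [Fintype ι] {f : ι → ℝ} (hf : ∀ i, 0 ≤ f i) {m : ℕ}
    {ℓ : ℝ} (I : Fin m → ι) (hI : Function.Injective I) (hℓ : ∀ j, ℓ ≤ f (I j)) :
    m * ℓ ≤ ∑ i, f i :=
  calc (m : ℝ) * ℓ ≤ ∑ j, f (I j) := by
        simpa using card_nsmul_le_sum univ (f ∘ I) ℓ fun j _ => hℓ j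
    _ = ∑ i ∈ univ.map ⟨I, hI⟩, f i := by rw [sum_map]; rfl
    _ ≤ ∑ i, f i := sum_le_sum_of_subset_of_nonneg (subset_univ _) fun i _ _ => hf i

lemma eq_of_mem_block {n k j₁ j₂ i : ℕ} (h₁ : n + j₁ * k ≤ i ∧ i < n + j₁ * k + k)
    (h₂ : n + j₂ * k ≤ i ∧ i < n + j₂ * k + k) : j₁ = j₂ := by
  have block : ∀ j, n + j * k ≤ i ∧ i < n + j * k + k → (i - n) / k = j := fun j hj =>
    Nat.div_eq_of_lt_le (by omega) (by rw [Nat.succ_mul]; omega)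
  rw [← block j₁ h₁, block j₂ h₂]

section Matching

variable [MetricSpace V]

lemma sum_dist_sub_sum_dist_le_matchDist {X Y : Finset V} (hXY : #X = #Y) (r : V) :
    ∑ x ∈ X, dist x r - ∑ y ∈ Y, dist y r ≤ matchDist X Y := by
  refine le_csInf ⟨_, equivOfCardEq hXY, rfl⟩ ?_
  rintro _ ⟨f, rfl⟩
  rw [← sum_coe_sort X, ← sum_coe_sort Y, ← Equiv.sum_comp f, ← sum_sub_distrib]
  gcongr with x
  linarith [dist_triangle (x : V) (f x) r]

lemma dist_le_matchDist_insert_erase [DecidableEq V] {X : Finset V} {x r : V} (hx : x ∈ X)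
    (hr : r ∉ X) : dist x r ≤ matchDist X (insert r (X.erase x)) := by
  have hr' : r ∉ X.erase x := fun h => hr (mem_of_mem_erase h)
  have hcard : #X = #(insert r (X.erase x)) := by
    rw [card_insert_of_notMem hr', card_erase_add_one hx]
  have := sum_dist_sub_sum_dist_le_matchDist hcard r
  rwa [sum_insert hr', dist_self, zero_add, ← add_sum_erase X _ hx, add_sub_cancel_right] at this

end Matching

section LazyStep

variable [DecidableEq V] {X : Finset V} {x r : V}

lemma eq_of_card_insert_erase (hx : x ∈ X) (hr : r ∈ X) (h : #(insert r (X.erase x)) = #X) :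
    x = r := by
  by_contra hxr
  rw [insert_eq_of_mem (mem_erase.2 ⟨Ne.symm hxr, hr⟩), card_erase_of_mem hx] at h
  have := card_pos.2 ⟨x, hx⟩
  omega

lemma insert_inter_subset_or_le_matchDist [MetricSpace V] {A : Finset V} {ℓ : ℝ}
    (hA : (A : Set V).Pairwise fun a b => ℓ ≤ dist a b) (hx : x ∈ X) (hr : r ∈ A)
    (h : #(insert r (X.erase x)) = #X) :
    insert r (X ∩ A) ⊆ insert r (X.erase x) ∨ ℓ ≤ matchDist X (insert r (X.erase x)) := by
  by_cases hxr : x = r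
  · subst hxr
    left
    rw [insert_erase hx]
    exact insert_subset hx inter_subset_left
  by_cases hxA : x ∈ A
  · have hrX : r ∉ X := fun hrX => hxr (eq_of_card_insert_erase hx hrX h)
    exact Or.inr ((hA hxA hr hxr).trans (dist_le_matchDist_insert_erase hx hrX))
  · refine Or.inl (insert_subset_insert r fun y hy => mem_erase.2 ⟨?_, (mem_inter.1 hy).1⟩)
    rintro rfl
    exact hxA (mem_inter.1 hy).2

end LazyStep

namespace IsLazy

variable [DecidableEq V] {k : ℕ} {R : List V} {C : Fin (R.length + 1) → Finset V}
  {A : Finset V}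

lemma eq_of_le (hlazy : IsLazy R C) (hcard : ∀ i, #(C i) = k) {s : Fin (R.length + 1)}
    (hs : C s = A) (hreq : ∀ i : Fin R.length, (s : ℕ) ≤ i → R.get i ∈ A) (t : Fin (R.length + 1))
    (hst : s ≤ t) : C t = A := by
  refine Fin.induction_from (P := fun u => C u = A) hs (fun i hsi hi => ?_) t hst
  obtain ⟨x, hx, hstep⟩ := hlazy i
  have hxr := eq_of_card_insert_erase hx (hi ▸ hreq i hsi) (by rw [← hstep, hcard, hcard])
  rw [hstep, ← hxr, insert_erase hx, hi]

lemma get_mem_of_cheap [MetricSpace V] (hlazy : IsLazy R C) (hcard : ∀ i, #(C i) = k) {ℓ : ℝ}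
    (hA : (A : Set V).Pairwise fun a b => ℓ ≤ dist a b) {s t : Fin (R.length + 1)}
    (hreq : ∀ i : Fin R.length, (s : ℕ) ≤ i → R.get i ∈ A)
    (hcheap : ∀ i : Fin R.length, (s : ℕ) ≤ i ∧ (i : ℕ) < t →
      matchDist (C i.castSucc) (C i.succ) < ℓ)
    (hst : s ≤ t) (i : Fin R.length) (hi : (s : ℕ) ≤ i ∧ (i : ℕ) < t) : R.get i ∈ C t := by
  suffices ∀ u, s ≤ u → u ≤ t → ∀ i : Fin R.length, (s : ℕ) ≤ i ∧ (i : ℕ) < u →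
      R.get i ∈ C u from this t hst le_rfl i hi
  refine Fin.induction_from (P := fun u => u ≤ t → ∀ i : Fin R.length,
    (s : ℕ) ≤ i ∧ (i : ℕ) < u → R.get i ∈ C u) (fun _ i hi => by omega)
    (fun u hsu ih hut i hi => ?_)
  obtain ⟨x, hx, hstep⟩ := hlazy u
  have hut' : (u : ℕ) < t := Fin.lt_def.1 (Fin.castSucc_lt_succ.trans_le hut)
  have hsub : insert (R.get u) (C u.castSucc ∩ A) ⊆ C u.succ := by
    rw [hstep]
    refine (insert_inter_subset_or_le_matchDist hA hx (hreq u hsu)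
      (by rw [← hstep, hcard, hcard])).resolve_right ?_
    rw [← hstep]
    exact not_le.2 (hcheap u ⟨hsu, hut'⟩)
  rcases (show (i : ℕ) < u ∨ i = u by rw [Fin.val_succ] at hi; omega) with hiu | rfl
  · exact hsub (mem_insert_of_mem (mem_inter.2
      ⟨ih (Fin.castSucc_lt_succ.le.trans hut) i ⟨hi.1, hiu⟩, hreq i hi.1⟩))
  · exact hsub (mem_insert_self _ _)

lemma exists_le_matchDist [MetricSpace V] (hlazy : IsLazy R C) (hcard : ∀ i, #(C i) = k)
    (hAcard : #A = k) {ℓ : ℝ} (hA : (A : Set V).Pairwise fun a b => ℓ ≤ dist a b)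
    (hend : C (Fin.last _) ≠ A) {s t : ℕ} (hst : s ≤ t) (ht : t ≤ R.length)
    (hreq : ∀ i : Fin R.length, s ≤ i → R.get i ∈ A)
    (hcover : ∀ a ∈ A, ∃ i : Fin R.length, (s ≤ i ∧ (i : ℕ) < t) ∧ R.get i = a) :
    ∃ i : Fin R.length, (s ≤ i ∧ (i : ℕ) < t) ∧ ℓ ≤ matchDist (C i.castSucc) (C i.succ) := by
  by_contra! hcheap
  let tₑ : Fin (R.length + 1) := ⟨t, Nat.lt_succ_of_le ht⟩
  have hsub : A ⊆ C tₑ := fun a ha => by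
    obtain ⟨i, hi, rfl⟩ := hcover a ha
    exact hlazy.get_mem_of_cheap (s := ⟨s, by omega⟩) hcard hA hreq hcheap hst i hi
  have hCt : C tₑ = A := (eq_of_subset_of_card_le hsub (by rw [hcard, hAcard])).symm
  exact hend (hlazy.eq_of_le hcard hCt (fun i hi => hreq i (hst.trans hi)) _ (Fin.le_last _))

end IsLazy

theorem lazy_not_home_expensive_general [MetricSpace V] [DecidableEq V]
    (k m : ℕ) (a : Fin k → V) (ha : Function.Injective a)
    (A₀ : Finset V) (hA₀ : A₀ = Finset.image a Finset.univ)
    (ℓ : ℝ)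
    (hℓle : ∀ i j : Fin k, i ≠ j → ℓ ≤ dist (a i) (a j))
    (ρ : List V)
    (σ : List V) (hσ : σ = List.flatten (List.replicate m (List.ofFn a)))
    (C : Fin ((ρ ++ σ).length + 1) → Finset V)
    (hserve : Serves k A₀ (ρ ++ σ) C) (hlazy : IsLazy (ρ ++ σ) C)
    (hend : C (Fin.last _) ≠ A₀) :
    (m : ℝ) * ℓ ≤ schedCost C := by
  obtain ⟨-, hcard, -⟩ := hserve
  have hAcard : #A₀ = k := by rw [hA₀, card_image_of_injective _ ha, card_univ, Fintype.card_fin]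
  have hsep : (A₀ : Set V).Pairwise fun x y => ℓ ≤ dist x y := by
    rw [hA₀, coe_image]
    rintro _ ⟨i, -, rfl⟩ _ ⟨j, -, rfl⟩ hij
    exact hℓle i j (ne_of_apply_ne a hij)
  have hσA : ∀ x ∈ σ, x ∈ A₀ := by simp [hσ, hA₀, List.mem_flatten]
  have hreq : ∀ i : Fin (ρ ++ σ).length, ρ.length ≤ i → (ρ ++ σ).get i ∈ A₀ := fun i hi => by
    rw [List.get_eq_getElem, List.getElem_append_right hi]
    exact hσA _ (List.getElem_mem _)
  have hcycle : ∀ j : Fin m, ∃ i : Fin (ρ ++ σ).length,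
      (ρ.length + j * k ≤ i ∧ (i : ℕ) < ρ.length + j * k + k) ∧
        ℓ ≤ matchDist (C i.castSucc) (C i.succ) := fun j =>
    hlazy.exists_le_matchDist hcard hAcard hsep hend (Nat.le_add_right _ _)
      (by rw [hσ, List.length_append, List.length_flatten_replicate, List.length_ofFn]
          nlinarith [j.2])
      (fun i hi => hreq i ((Nat.le_add_right _ _).trans hi))
      fun x hx => by
        obtain ⟨t, -, rfl⟩ := mem_image.1 (hA₀ ▸ hx)
        exact hσ ▸ ρ.exists_get_append_flatten_replicate_ofFn a j.2 t
  choose I hI hIℓ using hcycle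
  exact mul_le_sum_of_injective (fun i => matchDist_nonneg _ _) I
    (fun j₁ j₂ h => Fin.ext (eq_of_mem_block (hI j₁) (h ▸ hI j₂))) hIℓ

/-- a lazy online algorithm that does not end the anchor phase in
`A₀` pays at least `m * ℓ` on `ρσ`. -/
theorem lazy_not_home_expensive [MetricSpace V] [DecidableEq V]
    (k m : ℕ) (hk : 0 < k) (a : Fin k → V) (ha : Function.Injective a)
    (A₀ : Finset V) (hA₀ : A₀ = Finset.image a Finset.univ)
    (ℓ : ℝ) (hℓ : 0 < ℓ)
    (hℓle : ∀ i j : Fin k, i ≠ j → ℓ ≤ dist (a i) (a j))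
    (ρ : List V)
    (σ : List V) (hσ : σ = List.flatten (List.replicate m (List.ofFn a)))
    (C : Fin ((ρ ++ σ).length + 1) → Finset V)
    (hserve : Serves k A₀ (ρ ++ σ) C) (hlazy : IsLazy (ρ ++ σ) C)
    (hend : C (Fin.last _) ≠ A₀) :
    (m : ℝ) * ℓ ≤ schedCost C :=
  lazy_not_home_expensive_general k m a ha A₀ hA₀ ℓ hℓle ρ σ hσ C hserve hlazy hend
end
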